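/- arXiv:2503.06758 — 5 statements merged into one kernel-verified Lean document; each statement's English description precedes it below -/
import Mathlib

section
/- There exists a strongly increasing sequence of length ω₁ consisting of functions from ω to ω. -/
open Ordinal Cardinal

/-- `f <ₙ g` : `f m < g m` for all `m ∈ ω \ n`. -/
def LtN (n : ℕ) (f g : ℕ → Ordinal) : Prop := ∀ m : ℕ, n ≤ m → f m < g m

/-- `f ≤ₙ g` : `f m ≤ g m` for all `m ∈ ω \ n`. -/
def LeN (n : ℕ) (f g : ℕ → Ordinal) : Prop := ∀ m : ℕ, n ≤ m → f m ≤ g m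

/-- `f <* g` : `f m < g m` for all but finitely many `m`. -/
def LtStar (f g : ℕ → Ordinal) : Prop := ∃ n : ℕ, LtN n f g

/-- `f =* g` : `f m = g m` for all but finitely many `m`. -/
def EqStar (f g : ℕ → Ordinal) : Prop := ∃ n : ℕ, ∀ m : ℕ, n ≤ m → f m = g m

/-- `C` is a club (closed unbounded) subset of the (limit) ordinal `β`:
`C ⊆ β`, `C` is closed in `β`, and `C` is unbounded in `β`. -/
def IsClubIn (C : Set Ordinal) (β : Ordinal) : Prop :=
  C ⊆ Set.Iio β ∧
  (∀ α < β, α ≠ 0 → (∀ δ < α, ∃ x ∈ C, δ < x ∧ x < α) → α ∈ C) ∧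
  (∀ δ < β, ∃ x ∈ C, δ < x)

/-- `S` is a stationary subset of `lam`: it meets every club subset of `lam`. -/
def StationaryIn (S : Set Ordinal) (lam : Ordinal) : Prop :=
  ∀ C : Set Ordinal, IsClubIn C lam → (S ∩ C).Nonempty

/-- `⟨f α : α < γ⟩` is a strongly increasing sequence of functions from `ω` to the
ordinals. -/
def StronglyIncreasingOn (f : Ordinal → ℕ → Ordinal) (γ : Ordinal) : Prop :=
  (∀ α β : Ordinal, α < β → β < γ → LtStar (f α) (f β)) ∧
  (∀ β < γ, Order.IsSuccLimit β →
    ∃ C : Set Ordinal, ∃ n : ℕ, IsClubIn C β ∧ ∀ α ∈ C, LtN n (f α) (f β))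

/-- `⟨f α : α < γ⟩` is a very strongly increasing sequence: it is strongly increasing,
the witnessing `n_β` can be taken to be `0` at limits of uncountable cofinality, and
condition (2) of Definition 1.2 holds at ordinals of the form `β + ω`. -/
def VeryStronglyIncreasingOn (f : Ordinal → ℕ → Ordinal) (γ : Ordinal) : Prop :=
  StronglyIncreasingOn f γ ∧
  (∀ β < γ, Order.IsSuccLimit β → Cardinal.aleph0 < β.cof →
    ∃ C : Set Ordinal, IsClubIn C β ∧ ∀ α ∈ C, LtN 0 (f α) (f β)) ∧
  (∀ β : Ordinal, β + Ordinal.omega0 < γ → ∀ n : ℕ,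
    ∃ α : Ordinal, β + 1 ≤ α ∧ α < β + Ordinal.omega0 ∧
      LeN n (f α) (f (β + Ordinal.omega0)) ∧ ∀ m : ℕ, m < n → f α m = 0)

/-- `g` is an exact upper bound for `⟨f α : α < γ⟩`. -/
def IsEUB (f : Ordinal → ℕ → Ordinal) (γ : Ordinal) (g : ℕ → Ordinal) : Prop :=
  (∀ α < γ, LtStar (f α) g) ∧
  (∀ h : ℕ → Ordinal, LtStar h g → ∃ α < γ, LtStar h (f α))

/-- `β` is good for `⟨f α : α < γ⟩` (only the restriction `f ↾ β` matters). -/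
def IsGoodFor (f : Ordinal → ℕ → Ordinal) (β : Ordinal) : Prop :=
  Cardinal.aleph0 < β.cof ∧
  ∃ h : ℕ → Ordinal, IsEUB f β h ∧ ∃ n : ℕ, ∀ i : ℕ, n ≤ i → (h i).cof = β.cof

/-- The Chang's Conjecture principle `(κ, lam) ↠ (δ, γ)`: every structure over a
countable first-order language with universe of cardinality `κ`, together with a subset
`B` of the universe of cardinality `lam`, admits an elementary substructure `X` of
cardinality `δ` with `|X ∩ B| = γ`. -/
def ChangsConjecture (κ lam δ γ : Cardinal) : Prop :=
  ∀ (L : FirstOrder.Language.{0, 0}) (M : Type) (_ : L.Structure M),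
    L.card ≤ Cardinal.aleph0 → Cardinal.mk M = κ →
    ∀ B : Set M, Cardinal.mk B = lam →
      ∃ X : L.ElementarySubstructure M,
        Cardinal.mk X = δ ∧ Cardinal.mk ((X : Set M) ∩ B : Set M) = γ

/-!
By recursion on `β < ω₁` we build `f_β : ω → ω` such that `f_β` vanishes below the finite part
`β % ω` of `β` and `f_{α+1} = f_α + 1` above it. At a limit `β` we fix a monotone ladder
`γ_k → β` with `γ_k % ω = k` and put `f_β(m) = max_{k ≤ m} f_{γ_k}(m) + 1`. The rungs with
`k > m` vanish at `m`, so `f_{γ_k} < f_β` everywhere; and the range of the ladder, an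
`ω`-sequence cofinal in `β`, is club in `β`. Thus `n_β = 0` works at every limit.
-/

namespace StronglyIncreasingOmegaOne

open Order Filter

universe u

theorem isClubIn_range_of_monotone {s : ℕ → Ordinal.{u}} {β : Ordinal.{u}} (hs : Monotone s)
    (hlt : ∀ k, s k < β) (hcof : ∀ δ < β, ∃ k, δ < s k) : IsClubIn (Set.range s) β := by
  refine ⟨Set.range_subset_iff.2 hlt, fun α hαβ hα0 hacc => ?_, fun δ hδ => ?_⟩
  · have hex : ∃ k, α ≤ s k := (hcof α hαβ).imp fun _ => le_of_lt
    let k := Nat.find hex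
    -- only finitely many terms lie below `α`, so their maximum `δ` is still `< α`
    set δ := (Finset.range k).sup s
    have hδ : δ < α := Finset.sup_lt_iff (bot_lt_iff_ne_bot.2 hα0) |>.2 fun j hj =>
      not_le.1 (Nat.find_min hex (Finset.mem_range.1 hj))
    obtain ⟨_, ⟨i, rfl⟩, hδi, hiα⟩ := hacc δ hδ
    have hik : i < k := by
      by_contra! h
      exact (hiα.trans_le (Nat.find_spec hex)).not_ge (hs h)
    exact absurd (Finset.le_sup (Finset.mem_range.2 hik)) hδi.not_ge
  · obtain ⟨k, hk⟩ := hcof δ hδ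
    exact ⟨s k, Set.mem_range_self k, hk⟩

theorem countable_Iio_of_lt_aleph_one_ord {β : Ordinal.{u}} (hβ : β < (aleph 1).ord) :
    (Set.Iio β).Countable := by
  rw [← Cardinal.le_aleph0_iff_set_countable, Cardinal.mk_Iio_ordinal, Cardinal.lift_le_aleph0,
    ← Cardinal.lt_aleph_one_iff]
  exact Cardinal.lt_ord.1 hβ

theorem exists_monotone_cofinal_of_lt_aleph_one_ord {β : Ordinal.{u}} (hβ : β < (aleph 1).ord)
    (h0 : β ≠ 0) :
    ∃ η : ℕ → Ordinal.{u}, Monotone η ∧ (∀ k, η k < β) ∧ ∀ δ < β, ∃ k, δ ≤ η k := by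
  have : Countable (Set.Iio β) := (countable_Iio_of_lt_aleph_one_ord hβ).to_subtype
  have : Nonempty (Set.Iio β) := ⟨⟨0, pos_iff_ne_zero.2 h0⟩⟩
  obtain ⟨η, hmono, htends⟩ := exists_seq_monotone_tendsto_atTop_atTop (Set.Iio β)
  exact ⟨fun k => η k, fun _ _ hij => hmono hij, fun k => (η k).2,
    fun δ hδ => (tendsto_atTop.1 htends ⟨δ, hδ⟩).exists⟩

open scoped Classical in
/-- A monotone sequence cofinal in `β` when `0 < β < ω₁`; the constant `0` otherwise. -/
noncomputable def fundSeq (β : Ordinal.{u}) : ℕ → Ordinal.{u} :=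
  if h : ∃ η : ℕ → Ordinal.{u}, Monotone η ∧ (∀ k, η k < β) ∧ ∀ δ < β, ∃ k, δ ≤ η k then
    h.choose
  else 0

theorem fundSeq_monotone (β : Ordinal.{u}) : Monotone (fundSeq β) := by
  unfold fundSeq
  split_ifs with h
  · exact h.choose_spec.1
  · exact monotone_const

theorem fundSeq_lt {β : Ordinal.{u}} (h0 : β ≠ 0) (k : ℕ) : fundSeq β k < β := by
  unfold fundSeq
  split_ifs with h
  · exact h.choose_spec.2.1 k
  · exact pos_iff_ne_zero.2 h0

theorem exists_le_fundSeq {β : Ordinal.{u}} (hβ : β < (aleph 1).ord) (h0 : β ≠ 0) :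
    ∀ δ < β, ∃ k, δ ≤ fundSeq β k := by
  have h := exists_monotone_cofinal_of_lt_aleph_one_ord hβ h0
  unfold fundSeq
  rw [dif_pos h]
  exact h.choose_spec.2.2

noncomputable def ladder (β : Ordinal.{u}) (k : ℕ) : Ordinal.{u} :=
  ω * (fundSeq β k / ω) + k

theorem ladder_mod_omega0 (β : Ordinal.{u}) (k : ℕ) : ladder β k % ω = k := by
  rw [ladder, mul_add_mod_self, mod_eq_of_lt (natCast_lt_omega0 k)]

theorem ladder_monotone (β : Ordinal.{u}) : Monotone (ladder β) := fun _ _ hij =>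
  add_le_add (mul_le_mul_right (div_le_left (fundSeq_monotone β hij) ω) ω) (Nat.cast_le.2 hij)

theorem ladder_lt {β : Ordinal.{u}} (hl : IsSuccLimit β) (k : ℕ) : ladder β k < β :=
  hl.add_natCast_lt ((mul_div_le _ _).trans_lt (fundSeq_lt hl.ne_zero k)) k

theorem exists_lt_ladder {β : Ordinal.{u}} (hβ : β < (aleph 1).ord) (h0 : β ≠ 0) :
    ∀ δ < β, ∃ k, δ < ladder β k := by
  intro δ hδ
  obtain ⟨j, hj⟩ := exists_le_fundSeq hβ h0 δ hδ
  obtain ⟨r, hr⟩ := lt_omega0.1 (mod_lt δ omega0_ne_zero)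
  refine ⟨max j (r + 1), ?_⟩
  have hq : ω * (δ / ω) ≤ ω * (fundSeq β (max j (r + 1)) / ω) :=
    mul_le_mul_right (div_le_left (hj.trans (fundSeq_monotone β (le_max_left _ _))) ω) ω
  calc δ = ω * (δ / ω) + r := by rw [← hr, div_add_mod]
    _ < ω * (δ / ω) + (max j (r + 1) : ℕ) := by gcongr; exact_mod_cast by omega
    _ ≤ ladder β (max j (r + 1)) := add_le_add_left hq _

theorem isClubIn_range_ladder {β : Ordinal.{u}} (hβ : β < (aleph 1).ord) (hl : IsSuccLimit β) :
    IsClubIn (Set.range (ladder β)) β :=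
  isClubIn_range_of_monotone (ladder_monotone β) (ladder_lt hl) (exists_lt_ladder hβ hl.ne_zero)

open scoped Classical in
noncomputable def seq (β : Ordinal.{u}) (m : ℕ) : ℕ :=
  if h0 : β = 0 then 0
  else if hl : IsSuccLimit β then (Finset.range (m + 1)).sup (fun k => seq (ladder β k) m) + 1
  else if (m : Ordinal) < β % ω then 0
  else seq (Ordinal.pred β) m + 1
termination_by β
decreasing_by
  · exact ladder_lt hl k
  · exact Ordinal.pred_lt_iff_not_isSuccPrelimit.2 fun h =>
      hl (.mk (not_isMin_iff_ne_bot.2 h0) h)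

theorem seq_of_isSuccLimit {β : Ordinal.{u}} (hl : IsSuccLimit β) (m : ℕ) :
    seq β m = (Finset.range (m + 1)).sup (fun k => seq (ladder β k) m) + 1 := by
  rw [seq, dif_neg hl.ne_zero, dif_pos hl]

theorem seq_eq_zero_of_lt_mod {β : Ordinal.{u}} {m : ℕ} (hm : (m : Ordinal) < β % ω) :
    seq β m = 0 := by
  have h0 : β ≠ 0 := by rintro rfl; simp at hm
  have hl : ¬ IsSuccLimit β := fun hl => by
    rw [mod_eq_zero_of_dvd (isSuccPrelimit_iff_omega0_dvd.1 hl.isSuccPrelimit)] at hm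
    exact not_lt_zero hm
  rw [seq, dif_neg h0, dif_neg hl, if_pos hm]

theorem eventually_seq_succ (α : Ordinal.{u}) : ∀ᶠ m in atTop, seq (α + 1) m = seq α m + 1 := by
  obtain ⟨r, hr⟩ := lt_omega0.1 (mod_lt (α + 1) omega0_ne_zero)
  refine eventually_atTop.2 ⟨r, fun m hm => ?_⟩
  have hl : ¬ IsSuccLimit (α + 1) := by rw [← succ_eq_add_one]; exact not_isSuccLimit_succ α
  have hm' : ¬ (m : Ordinal) < (α + 1) % ω := by rw [hr, not_lt]; exact_mod_cast hm
  rw [seq, dif_neg (add_pos_of_right zero_lt_one α).ne', dif_neg hl, if_neg hm',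
    Ordinal.pred_add_one]

theorem seq_ladder_lt {β : Ordinal.{u}} (hl : IsSuccLimit β) (k m : ℕ) :
    seq (ladder β k) m < seq β m := by
  rw [seq_of_isSuccLimit hl, Nat.lt_succ_iff]
  rcases le_or_gt k m with hkm | hmk
  · exact Finset.le_sup (f := fun k => seq (ladder β k) m) (Finset.mem_range.2 (by omega))
  · rw [seq_eq_zero_of_lt_mod (by rw [ladder_mod_omega0]; exact_mod_cast hmk)]
    exact Nat.zero_le _

theorem eventually_seq_lt {α β : Ordinal.{u}} (hβ : β < (aleph 1).ord) (hαβ : α < β) :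
    ∀ᶠ m in atTop, seq α m < seq β m := by
  induction β using Ordinal.limitRecOn generalizing α with
  | zero => exact absurd hαβ not_lt_zero
  | add_one β ih =>
    have hsucc : ∀ᶠ m in atTop, seq β m < seq (β + 1) m :=
      (eventually_seq_succ β).mono fun m h => h ▸ Nat.lt_succ_self _
    rcases (lt_add_one_iff.1 hαβ).lt_or_eq with hlt | rfl
    · exact ((ih (lt_of_lt_of_le (lt_add_one β) hβ.le) hlt).and hsucc).mono
        fun m h => h.1.trans h.2
    · exact hsucc
  | limit β hl ih =>
    obtain ⟨k, hk⟩ := exists_lt_ladder hβ hl.ne_zero α hαβ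
    exact (ih _ (ladder_lt hl k) ((ladder_lt hl k).trans hβ) hk).mono
      fun m h => h.trans (seq_ladder_lt hl k m)

end StronglyIncreasingOmegaOne

open StronglyIncreasingOmegaOne Filter in
/-- There exists a strongly increasing sequence of length `ω₁` consisting
of functions from `ω` to `ω`. -/
theorem statement1 :
    ∃ f : Ordinal → ℕ → Ordinal,
      StronglyIncreasingOn f (Cardinal.aleph 1).ord ∧
      ∀ α < (Cardinal.aleph 1).ord, ∀ m : ℕ, f α m < Ordinal.omega0 := by
  refine ⟨fun α m => seq α m, ⟨fun α β hαβ hβ => ?_, fun β hβ hl => ?_⟩,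
    fun α _ m => natCast_lt_omega0 _⟩
  · obtain ⟨n, hn⟩ := eventually_atTop.1 (eventually_seq_lt hβ hαβ)
    exact ⟨n, fun m hm => Nat.cast_lt.2 (hn m hm)⟩
  · refine ⟨Set.range (ladder β), 0, isClubIn_range_ladder hβ hl, ?_⟩
    rintro _ ⟨k, rfl⟩ m -
    exact Nat.cast_lt.2 (seq_ladder_lt hl k m)
end

section
/- Suppose ⟨f_α : α ≤ γ⟩ is a very strongly increasing sequence of functions from ω to the ordinals. Define f_{γ+ω}(n) = f_γ(n) + n for each n ∈ ω, and for each positive k < ω define f_{γ+k}(n) = 0 if n ≤ k and f_{γ+k}(n) = f_γ(n) + k otherwise. Then the resulting sequence ⟨f_α : α ≤ γ + ω⟩ is very strongly increasing. -/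
open Ordinal Cardinal

/-!
Up to `γ` the sequence is unchanged, and among the new indices only `γ + ω` is a limit.
For `m > k` the value at `γ + k` is `f γ m + k`, so the tail is `<*`-increasing, and
`f (γ + ω)` beats every `f (γ + k)` from coordinate `1` on, so the club `(γ, γ + ω)` works
with `n = 1`. As `cf (γ + ω) = ω`, clause (i) asks nothing new, and clause (ii) at `γ + ω`
is witnessed by `γ + k` for `k` large, whose coordinates up to `k` vanish.
-/

open Order

namespace Ordinal

theorem exists_eq_add_natCast_of_le_of_lt_add_omega0 {γ x : Ordinal} (h₁ : γ ≤ x)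
    (h₂ : x < γ + ω) : ∃ k : ℕ, x = γ + k := by
  obtain ⟨k, hk⟩ := lt_omega0.1 (sub_lt_of_lt_add h₂ omega0_pos)
  exact ⟨k, by rw [← hk, Ordinal.add_sub_cancel_of_le h₁]⟩

theorem not_isSuccLimit_add_natCast (γ : Ordinal) {k : ℕ} (hk : k ≠ 0) :
    ¬ IsSuccLimit (γ + k) := by
  rw [isSuccLimit_add_iff]
  rintro (h | ⟨h, -⟩)
  · exact not_isSuccLimit_natCast k h
  · exact hk (by exact_mod_cast h)

theorem eq_add_omega0_of_isSuccLimit {γ β : Ordinal} (hβ : IsSuccLimit β) (h₁ : γ < β)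
    (h₂ : β ≤ γ + ω) : β = γ + ω := by
  refine h₂.eq_or_lt.resolve_right fun h => ?_
  obtain ⟨k, rfl⟩ := exists_eq_add_natCast_of_le_of_lt_add_omega0 h₁.le h
  refine not_isSuccLimit_add_natCast γ ?_ hβ
  rintro rfl
  simp at h₁

end Ordinal

theorem isClubIn_Ioo {γ β : Ordinal} (hβ : IsSuccLimit β) (hγ : γ < β) :
    IsClubIn (Set.Ioo γ β) β := by
  refine ⟨fun x hx => hx.2, fun α hα hα0 hacc => ?_, fun δ hδ => ?_⟩
  · obtain ⟨x, hx, -, hxα⟩ := hacc 0 (pos_iff_ne_zero.2 hα0)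
    exact ⟨hx.1.trans hxα, hα⟩
  · refine ⟨succ (max δ γ), ⟨?_, hβ.succ_lt (max_lt hδ hγ)⟩, ?_⟩
    · exact (le_max_right δ γ).trans_lt (lt_succ _)
    · exact (le_max_left δ γ).trans_lt (lt_succ _)

theorem LtStar.trans {f g h : ℕ → Ordinal} : LtStar f g → LtStar g h → LtStar f h
  | ⟨n₁, h₁⟩, ⟨n₂, h₂⟩ => ⟨max n₁ n₂, fun m hm =>
      (h₁ m (le_of_max_le_left hm)).trans (h₂ m (le_of_max_le_right hm))⟩

theorem ltStar_of_forall_le_of_forall_ge {f : Ordinal → ℕ → Ordinal} {γ δ : Ordinal}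
    (hlow : ∀ α β, α < β → β ≤ γ → LtStar (f α) (f β))
    (hhigh : ∀ α β, γ ≤ α → α < β → β < δ → LtStar (f α) (f β))
    {α β : Ordinal} (hαβ : α < β) (hβ : β < δ) : LtStar (f α) (f β) := by
  rcases le_or_gt β γ with hβγ | hγβ
  · exact hlow α β hαβ hβγ
  rcases le_or_gt γ α with hγα | hαγ
  · exact hhigh α β hγα hαβ hβ
  · exact (hlow α γ hαγ le_rfl).trans (hhigh γ β le_rfl hγβ hβ)

theorem VeryStronglyIncreasingOn.congr {f g : Ordinal → ℕ → Ordinal} {γ : Ordinal}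
    (hf : VeryStronglyIncreasingOn f γ) (h : ∀ α < γ, g α = f α) :
    VeryStronglyIncreasingOn g γ := by
  obtain ⟨⟨hf₁, hf₂⟩, hf₃, hf₄⟩ := hf
  refine ⟨⟨fun α β hαβ hβ => ?_, fun β hβ hl => ?_⟩, fun β hβ hl hcof => ?_, fun β hβ n => ?_⟩
  · rw [h α (hαβ.trans hβ), h β hβ]
    exact hf₁ α β hαβ hβ
  · obtain ⟨C, n, hC, hCf⟩ := hf₂ β hβ hl
    refine ⟨C, n, hC, fun α hα => ?_⟩
    rw [h α ((hC.1 hα).trans hβ), h β hβ]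
    exact hCf α hα
  · obtain ⟨C, hC, hCf⟩ := hf₃ β hβ hl hcof
    refine ⟨C, hC, fun α hα => ?_⟩
    rw [h α ((hC.1 hα).trans hβ), h β hβ]
    exact hCf α hα
  · obtain ⟨α, h₁, h₂, h₃, h₄⟩ := hf₄ β hβ n
    rw [h (β + ω) hβ]
    refine ⟨α, h₁, h₂, ?_, ?_⟩ <;> rwa [h α (h₂.trans hβ)]

section Extension

variable {g : Ordinal → ℕ → Ordinal} {γ : Ordinal}

theorem apply_add_natCast_of_lt
    (hg3 : ∀ k : ℕ, 0 < k → ∀ n : ℕ, g (γ + k) n = if n ≤ k then 0 else g γ n + k)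
    {k m : ℕ} (h : k < m) : g (γ + k) m = g γ m + k := by
  rcases Nat.eq_zero_or_pos k with rfl | hk
  · simp
  · rw [hg3 k hk m, if_neg h.not_ge]

theorem ltStar_add_natCast
    (hg3 : ∀ k : ℕ, 0 < k → ∀ n : ℕ, g (γ + k) n = if n ≤ k then 0 else g γ n + k)
    {j k : ℕ} (hjk : j < k) : LtStar (g (γ + j)) (g (γ + k)) := by
  refine ⟨k + 1, fun m hm => ?_⟩
  rw [apply_add_natCast_of_lt hg3 (by omega : j < m), apply_add_natCast_of_lt hg3 hm]
  gcongr

theorem ltN_one_add_omega0 (hg2 : ∀ n : ℕ, g (γ + ω) n = g γ n + n)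
    (hg3 : ∀ k : ℕ, 0 < k → ∀ n : ℕ, g (γ + k) n = if n ≤ k then 0 else g γ n + k)
    (k : ℕ) : LtN 1 (g (γ + k)) (g (γ + ω)) := by
  intro m hm
  rw [hg2]
  rcases lt_or_ge k m with hkm | hmk
  · rw [apply_add_natCast_of_lt hg3 hkm]
    gcongr
  · rw [hg3 k (hm.trans hmk) m, if_pos hmk]
    exact lt_of_lt_of_le (by exact_mod_cast hm : (0 : Ordinal) < m) le_add_self

theorem ltStar_of_le_of_le_add_omega0 (hg2 : ∀ n : ℕ, g (γ + ω) n = g γ n + n)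
    (hg3 : ∀ k : ℕ, 0 < k → ∀ n : ℕ, g (γ + k) n = if n ≤ k then 0 else g γ n + k)
    {α β : Ordinal} (hγα : γ ≤ α) (hαβ : α < β) (hβ : β ≤ γ + ω) : LtStar (g α) (g β) := by
  obtain ⟨j, rfl⟩ := exists_eq_add_natCast_of_le_of_lt_add_omega0 hγα (hαβ.trans_le hβ)
  rcases hβ.eq_or_lt with rfl | hβ
  · exact ⟨1, ltN_one_add_omega0 hg2 hg3 j⟩
  obtain ⟨k, rfl⟩ := exists_eq_add_natCast_of_le_of_lt_add_omega0 (hγα.trans hαβ.le) hβ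
  exact ltStar_add_natCast hg3 (by exact_mod_cast (add_lt_add_iff_left γ).1 hαβ)

theorem exists_club_ltN_one_add_omega0 (hg2 : ∀ n : ℕ, g (γ + ω) n = g γ n + n)
    (hg3 : ∀ k : ℕ, 0 < k → ∀ n : ℕ, g (γ + k) n = if n ≤ k then 0 else g γ n + k) :
    ∃ C : Set Ordinal, ∃ n : ℕ, IsClubIn C (γ + ω) ∧ ∀ α ∈ C, LtN n (g α) (g (γ + ω)) := by
  refine ⟨_, 1, isClubIn_Ioo (isSuccLimit_add γ isSuccLimit_omega0)
    (lt_add_of_pos_right γ omega0_pos), fun α hα => ?_⟩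
  obtain ⟨k, rfl⟩ := exists_eq_add_natCast_of_le_of_lt_add_omega0 hα.1.le hα.2
  exact ltN_one_add_omega0 hg2 hg3 k

theorem exists_vanishing_le_add_omega0 (hg2 : ∀ n : ℕ, g (γ + ω) n = g γ n + n)
    (hg3 : ∀ k : ℕ, 0 < k → ∀ n : ℕ, g (γ + k) n = if n ≤ k then 0 else g γ n + k)
    {β : Ordinal} (hβ : β < γ + ω) (n : ℕ) :
    ∃ α, β + 1 ≤ α ∧ α < γ + ω ∧ LeN n (g α) (g (γ + ω)) ∧ ∀ m < n, g α m = 0 := by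
  obtain ⟨d, hd, hβd⟩ := (lt_add_iff_of_isSuccLimit isSuccLimit_omega0).1 hβ
  obtain ⟨j, rfl⟩ := lt_omega0.1 hd
  have hk : 0 < max n j + 1 := Nat.succ_pos _
  refine ⟨γ + (max n j + 1 : ℕ), ?_, ?_, fun m _ => ?_, fun m hm => ?_⟩
  · rw [add_one_le_iff]
    exact hβd.trans_le (by gcongr; omega)
  · gcongr
    exact natCast_lt_omega0 _
  · rcases m.eq_zero_or_pos with rfl | hm
    · rw [hg3 _ hk 0, if_pos (Nat.zero_le _)]
      exact zero_le
    · exact (ltN_one_add_omega0 hg2 hg3 _ m hm).le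
  · rw [hg3 _ hk m, if_pos (by omega)]

theorem VeryStronglyIncreasingOn.add_omega0 (hg : VeryStronglyIncreasingOn g (γ + 1))
    (hg2 : ∀ n : ℕ, g (γ + ω) n = g γ n + n)
    (hg3 : ∀ k : ℕ, 0 < k → ∀ n : ℕ, g (γ + k) n = if n ≤ k then 0 else g γ n + k) :
    VeryStronglyIncreasingOn g (γ + ω + 1) := by
  obtain ⟨⟨hg₁, hg₂⟩, hg₃, hg₄⟩ := hg
  have hlim : ∀ β < γ + ω + 1, IsSuccLimit β → β < γ + 1 ∨ β = γ + ω := fun β hβ hl =>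
    (lt_or_ge β (γ + 1)).imp_right fun h =>
      eq_add_omega0_of_isSuccLimit hl (add_one_le_iff.1 h) (lt_add_one_iff.1 hβ)
  refine ⟨⟨fun α β hαβ hβ => ?_, fun β hβ hl => ?_⟩, fun β hβ hl hcof => ?_, fun β hβ n => ?_⟩
  · exact ltStar_of_forall_le_of_forall_ge
      (fun α β hαβ hβ => hg₁ α β hαβ (lt_add_one_iff.2 hβ))
      (fun α β hγα hαβ hβ => ltStar_of_le_of_le_add_omega0 hg2 hg3 hγα hαβ (lt_add_one_iff.1 hβ))
      hαβ hβ
  · rcases hlim β hβ hl with hβ | rfl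
    · exact hg₂ β hβ hl
    · exact exists_club_ltN_one_add_omega0 hg2 hg3
  · rcases hlim β hβ hl with hβ | rfl
    · exact hg₃ β hβ hl hcof
    · rw [cof_add γ omega0_ne_zero, cof_omega0] at hcof
      exact absurd hcof (lt_irrefl _)
  · rcases hlim (β + ω) hβ (isSuccLimit_add β isSuccLimit_omega0) with h | h
    · exact hg₄ β h n
    · rw [h]
      exact exists_vanishing_le_add_omega0 hg2 hg3
        (h ▸ lt_add_of_pos_right β omega0_pos) n

end Extension

/-- Extending a very strongly increasing sequence `⟨f_α : α ≤ γ⟩` by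
setting `f_{γ+ω}(n) = f_γ(n) + n` and, for positive `k < ω`, `f_{γ+k}(n) = 0` if
`n ≤ k` and `f_γ(n) + k` otherwise, yields a very strongly increasing sequence
`⟨f_α : α ≤ γ + ω⟩`. -/
theorem statement2 (f : Ordinal → ℕ → Ordinal) (γ : Ordinal)
    (hf : VeryStronglyIncreasingOn f (γ + 1))
    (g : Ordinal → ℕ → Ordinal)
    (hg1 : ∀ α ≤ γ, g α = f α)
    (hg2 : ∀ n : ℕ, g (γ + Ordinal.omega0) n = f γ n + (n : Ordinal))
    (hg3 : ∀ k : ℕ, 0 < k → ∀ n : ℕ,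
      g (γ + (k : Ordinal)) n = if n ≤ k then 0 else f γ n + (k : Ordinal)) :
    VeryStronglyIncreasingOn g (γ + Ordinal.omega0 + 1) := by
  rw [← hg1 γ le_rfl] at hg2 hg3
  exact (hf.congr fun α hα => hg1 α (lt_add_one_iff.1 hα)).add_omega0 hg2 hg3
end

section
/- Suppose ⟨f_α : α < γ⟩ is a very strongly increasing sequence of functions from ω to the ordinals, where γ is a limit ordinal of countable cofinality not of the form β + ω. If f : ω → Ord satisfies f_α <* f for all α < γ, then setting f_γ = f, the sequence ⟨f_α : α ≤ γ⟩ is very strongly increasing. -/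
open Ordinal Cardinal

/-! Only the new limit `γ` needs a club. As `cof γ = ω`, every set `S` unbounded in `γ` contains
one: an increasing ω-sequence through `S`, interleaved with a cofinal ω-sequence, has no limit
points below `γ`. Take `S = {α | f_α <_{n₀} f}` with `f_0 <_{n₀} f`, so that `f` is positive from
`n₀` on. For `β < γ` we have `β + ω < γ`; if `f_{β+ω} <_n f`, condition (ii) at `β + ω` gives
`α ∈ [β + 1, β + ω)` with `f_α ≤_n f_{β+ω}` and `f_α = 0` below `n`, hence `α ∈ S`. Conditions
(i) and (ii) say nothing new at `γ`, which has countable cofinality and is not of the form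
`β + ω`. -/

lemma add_omega0_le_of_isSuccLimit {γ δ : Ordinal} (hγ : Order.IsSuccLimit γ) (hδ : δ < γ) :
    δ + ω ≤ γ :=
  (add_le_iff_of_isSuccLimit isSuccLimit_omega0).2 fun d hd => by
    obtain ⟨n, rfl⟩ := lt_omega0.1 hd
    exact (hγ.add_natCast_lt hδ n).le

lemma exists_nat_cofinal_of_cof_eq_aleph0 {γ : Ordinal} (hγ : γ.cof = ℵ₀) :
    ∃ s : ℕ → Ordinal, (∀ i, s i < γ) ∧ ∀ δ < γ, ∃ i, δ ≤ s i := by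
  obtain ⟨e, he⟩ := exists_isFundamentalSeq (a := ω) (hγ ▸ ord_aleph0)
  refine ⟨fun i => e ⟨i, natCast_lt_omega0 i⟩, fun i => (e _).2, fun δ hδ => ?_⟩
  obtain ⟨_, ⟨⟨j, hj⟩, rfl⟩, hδj⟩ := he.isCofinal_range ⟨δ, hδ⟩
  obtain ⟨n, rfl⟩ := lt_omega0.1 hj
  exact ⟨n, hδj⟩

lemma Monotone.lt_of_forall_lt_exists_between {a : ℕ → Ordinal} (ha : Monotone a) {α : Ordinal}
    (hα : 0 < α) (H : ∀ δ < α, ∃ j, δ < a j ∧ a j < α) (i : ℕ) : a i < α := by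
  induction i with
  | zero =>
    obtain ⟨j, -, hj⟩ := H 0 hα
    exact (ha (Nat.zero_le j)).trans_lt hj
  | succ i ih =>
    obtain ⟨j, hij, hj⟩ := H (a i) ih
    exact (ha (ha.reflect_lt hij)).trans_lt hj

lemma isClubIn_range_of_monotone {a : ℕ → Ordinal} {γ : Ordinal} (ha : Monotone a)
    (hlt : ∀ i, a i < γ) (hcof : ∀ δ < γ, ∃ i, δ < a i) : IsClubIn (Set.range a) γ := by
  refine ⟨Set.range_subset_iff.2 hlt, fun α hαγ hα0 H => ?_, fun δ hδ => ?_⟩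
  · obtain ⟨i, hi⟩ := hcof α hαγ
    refine absurd hi (not_lt.2 (ha.lt_of_forall_lt_exists_between (pos_iff_ne_zero.2 hα0)
      (fun δ hδ => ?_) i).le)
    simpa only [Set.exists_range_iff] using H δ hδ
  · obtain ⟨i, hi⟩ := hcof δ hδ
    exact ⟨a i, ⟨i, rfl⟩, hi⟩

lemma exists_isClubIn_subset_of_cof_eq_aleph0 {γ : Ordinal} (hγ : γ.cof = ℵ₀) {S : Set Ordinal}
    (hS : ∀ β < γ, ∃ α ∈ S, β < α ∧ α < γ) : ∃ C ⊆ S, IsClubIn C γ := by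
  obtain ⟨s, hsγ, hs⟩ := exists_nat_cofinal_of_cof_eq_aleph0 hγ
  choose! next hnextS hlt_next hnext_lt using hS
  let a : ℕ → Ordinal := fun i => Nat.rec (next (s 0)) (fun k ak => next (max ak (s (k + 1)))) i
  have haγ : ∀ i, a i < γ := by
    intro i
    induction i with
    | zero => exact hnext_lt _ (hsγ 0)
    | succ i ih => exact hnext_lt _ (max_lt ih (hsγ _))
  have ha_succ : ∀ i, max (a i) (s (i + 1)) < a (i + 1) :=
    fun i => hlt_next _ (max_lt (haγ i) (hsγ _))
  have hsa : ∀ i, s i < a i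
    | 0 => hlt_next _ (hsγ 0)
    | i + 1 => (le_max_right _ _).trans_lt (ha_succ i)
  refine ⟨Set.range a, Set.range_subset_iff.2 fun i => ?_, isClubIn_range_of_monotone
    (monotone_nat_of_le_succ fun i => ((le_max_left _ _).trans_lt (ha_succ i)).le) haγ
    fun δ hδ => ?_⟩
  · cases i with
    | zero => exact hnextS _ (hsγ 0)
    | succ i => exact hnextS _ (max_lt (haγ i) (hsγ _))
  · obtain ⟨i, hi⟩ := hs δ hδ
    exact ⟨i, hi.trans_lt (hsa i)⟩

lemma ltN_of_leN_of_eq_zero {n n₀ : ℕ} {f h g : ℕ → Ordinal} (hfh : LeN n f h) (hhg : LtN n h g)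
    (hf : ∀ m < n, f m = 0) (hg : ∀ m, n₀ ≤ m → 0 < g m) : LtN n₀ f g := fun m hm => by
  rcases lt_or_ge m n with hmn | hmn
  · rw [hf m hmn]
    exact hg m hm
  · exact (hfh m hmn).trans_lt (hhg m hmn)

namespace VeryStronglyIncreasingOn

variable {f F : Ordinal → ℕ → Ordinal} {γ : Ordinal}

lemma congr_s3 (hf : VeryStronglyIncreasingOn f γ) (hF : ∀ α < γ, F α = f α) :
    VeryStronglyIncreasingOn F γ := by
  obtain ⟨⟨hinc, hlim⟩, hcof, hblock⟩ := hf
  refine ⟨⟨fun α β hαβ hβ => ?_, fun β hβ hβlim => ?_⟩, fun β hβ hβlim hβcof => ?_,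
    fun β hβ n => ?_⟩
  · rw [hF α (hαβ.trans hβ), hF β hβ]
    exact hinc α β hαβ hβ
  · obtain ⟨C, n, hC, hCn⟩ := hlim β hβ hβlim
    refine ⟨C, n, hC, fun α hα => ?_⟩
    rw [hF α ((hC.1 hα).trans hβ), hF β hβ]
    exact hCn α hα
  · obtain ⟨C, hC, hCn⟩ := hcof β hβ hβlim hβcof
    refine ⟨C, hC, fun α hα => ?_⟩
    rw [hF α ((hC.1 hα).trans hβ), hF β hβ]
    exact hCn α hα
  · obtain ⟨α, hβα, hαω, hle, hzero⟩ := hblock β hβ n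
    refine ⟨α, hβα, hαω, ?_⟩
    rw [hF α (hαω.trans hβ), hF _ hβ]
    exact ⟨hle, hzero⟩

lemma add_one (hf : VeryStronglyIncreasingOn f γ) (hγcof : γ.cof ≤ ℵ₀)
    (hγform : ∀ β, γ ≠ β + ω) (hlt : ∀ α < γ, LtStar (f α) (f γ)) {C : Set Ordinal} {n : ℕ}
    (hC : IsClubIn C γ) (hCn : ∀ α ∈ C, LtN n (f α) (f γ)) :
    VeryStronglyIncreasingOn f (γ + 1) := by
  obtain ⟨⟨hinc, hlim⟩, hcof, hblock⟩ := hf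
  refine ⟨⟨fun α β hαβ hβ => ?_, fun β hβ hβlim => ?_⟩, fun β hβ hβlim hβcof => ?_,
    fun β hβ => hblock β ((Order.lt_add_one_iff.1 hβ).lt_of_ne (hγform β).symm)⟩
  · rcases (Order.lt_add_one_iff.1 hβ).lt_or_eq with hβγ | rfl
    exacts [hinc α β hαβ hβγ, hlt α hαβ]
  · rcases (Order.lt_add_one_iff.1 hβ).lt_or_eq with hβγ | rfl
    exacts [hlim β hβγ hβlim, ⟨C, n, hC, hCn⟩]
  · rcases (Order.lt_add_one_iff.1 hβ).lt_or_eq with hβγ | rfl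
    exacts [hcof β hβγ hβlim hβcof, absurd hβcof hγcof.not_gt]

end VeryStronglyIncreasingOn

/-- If `⟨f_α : α < γ⟩` is a very strongly increasing sequence, `γ` a limit
ordinal of countable cofinality not of the form `β + ω`, and `f_α <* f` for all `α < γ`,
then appending `f` at position `γ` gives a very strongly increasing sequence
`⟨f_α : α ≤ γ⟩`. -/
theorem statement3 (f : Ordinal → ℕ → Ordinal) (γ : Ordinal)
    (hγlim : Order.IsSuccLimit γ) (hγcof : γ.cof = Cardinal.aleph0)
    (hγform : ∀ β : Ordinal, γ ≠ β + Ordinal.omega0)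
    (hf : VeryStronglyIncreasingOn f γ)
    (g : ℕ → Ordinal) (hg : ∀ α < γ, LtStar (f α) g)
    (F : Ordinal → ℕ → Ordinal)
    (hF1 : ∀ α < γ, F α = f α) (hF2 : F γ = g) :
    VeryStronglyIncreasingOn F (γ + 1) := by
  obtain ⟨n₀, hn₀⟩ := hg 0 hγlim.bot_lt
  have hg_pos : ∀ m, n₀ ≤ m → 0 < g m := fun m hm => zero_le.trans_lt (hn₀ m hm)
  obtain ⟨C, hCS, hC⟩ := exists_isClubIn_subset_of_cof_eq_aleph0 hγcof
    (S := {α | LtN n₀ (f α) g}) fun β hβ => by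
      have hβω : β + ω < γ := (add_omega0_le_of_isSuccLimit hγlim hβ).lt_of_ne (hγform β).symm
      obtain ⟨n, hn⟩ := hg _ hβω
      obtain ⟨α, hβα, hαω, hle, hzero⟩ := hf.2.2 β hβω n
      exact ⟨α, ltN_of_leN_of_eq_zero hle hn hzero hg_pos, Order.add_one_le_iff.1 hβα, hαω.trans hβω⟩
  refine (hf.congr_s3 hF1).add_one hγcof.le hγform (fun α hα => ?_) hC (n := n₀) fun α hα => ?_
  · rw [hF2, hF1 α hα]
    exact hg α hα
  · rw [hF2, hF1 α (hC.1 hα)]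
    exact hCS hα
end

section
/- If ⟨f_α : α < γ⟩ is a strongly increasing sequence of functions from ω to the ordinals, then there is a sequence ⟨f'_α : α < γ⟩ of functions from ω to the ordinals such that f_α =* f'_α for all α < γ, the sequence ⟨f'_α : α < γ⟩ is strongly increasing, and it satisfies: for each ordinal of the form β + ω < γ and each n ∈ ω there is α ∈ [β + 1, β + ω) such that f'_α ≤ₙ f'_{β+ω} and f'_α(m) = 0 for all m < n. -/
open Ordinal Cardinal

/-!
Work in ω-blocks `[λ, λ + ω)`. A successor ordinal `α` sitting at position `k = α % ω ≥ 1` of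
its block has `f_α <* f_{λ+ω}`, so setting `f_α(m) := 0` for `m < k` and wherever
`f_α(m) ≥ f_{λ+ω}(m)` changes `f_α` only finitely often. Lowering values and changing them
mod finite keeps `<*`, and limit ordinals are untouched, so the club condition survives. For
`β + ω` and `n`, the ordinal `α = β + (n + 1)` then satisfies `f'_α ≤ₙ f'_{β+ω}` and vanishes
below `n`.
-/

open Ordinal Order

namespace Ordinal

theorem mod_omega0_eq_zero_of_isSuccLimit {a : Ordinal} (h : IsSuccLimit a) : a % ω = 0 :=
  mod_eq_zero_of_dvd (isSuccPrelimit_iff_omega0_dvd.1 h.isSuccPrelimit)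

theorem add_natCast_mod_omega0 (a : Ordinal) (k : ℕ) : (a + k) % ω = a % ω + k := by
  conv_lhs => rw [← div_add_mod a ω, add_assoc, mul_add_mod_self]
  exact mod_eq_of_lt (isPrincipal_add_omega0 (mod_lt a omega0_ne_zero) (natCast_lt_omega0 k))

theorem add_natCast_add_omega0 (a : Ordinal) (k : ℕ) : a + k + ω = a + ω := by
  rw [add_assoc, natCast_add_omega0]

end Ordinal

theorem StronglyIncreasingOn.of_le_of_eqStar {f g : Ordinal → ℕ → Ordinal} {γ : Ordinal}
    (hf : StronglyIncreasingOn f γ) (hle : ∀ α < γ, ∀ m, g α m ≤ f α m)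
    (heq : ∀ α < γ, EqStar (f α) (g α)) (hlim : ∀ β < γ, IsSuccLimit β → g β = f β) :
    StronglyIncreasingOn g γ := by
  refine ⟨fun α β hαβ hβ => ?_, fun β hβ hβlim => ?_⟩
  · obtain ⟨n, hn⟩ := hf.1 α β hαβ hβ
    obtain ⟨k, hk⟩ := heq β hβ
    refine ⟨max n k, fun m hm => ?_⟩
    calc g α m ≤ f α m := hle α (hαβ.trans hβ) m
      _ < f β m := hn m (le_of_max_le_left hm)
      _ = g β m := hk m (le_of_max_le_right hm)
  · obtain ⟨C, n, hC, hCn⟩ := hf.2 β hβ hβlim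
    refine ⟨C, n, hC, fun α hα m hm => ?_⟩
    rw [hlim β hβ hβlim]
    exact (hle α ((hC.1 hα).trans hβ) m).trans_lt (hCn α hα m hm)

/-- For `α` in the block `[λ, λ + ω)` we have `α + ω = λ + ω` and `α % ω` is the position of
`α` in the block. -/
noncomputable def blockTrim (f : Ordinal → ℕ → Ordinal) (γ α : Ordinal) (m : ℕ) : Ordinal :=
  if α % ω ≠ 0 ∧ α + ω < γ ∧ ((m : Ordinal) < α % ω ∨ f (α + ω) m ≤ f α m) then 0 else f α m

section blockTrim

variable {f : Ordinal → ℕ → Ordinal} {γ : Ordinal}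

theorem blockTrim_le (α : Ordinal) (m : ℕ) : blockTrim f γ α m ≤ f α m := by
  unfold blockTrim
  split_ifs
  exacts [zero_le, le_rfl]

theorem blockTrim_of_isSuccLimit {β : Ordinal} (hβ : IsSuccLimit β) : blockTrim f γ β = f β := by
  funext m
  simp [blockTrim, mod_omega0_eq_zero_of_isSuccLimit hβ]

theorem eqStar_blockTrim (hf : ∀ α β, α < β → β < γ → LtStar (f α) (f β)) (α : Ordinal) :
    EqStar (f α) (blockTrim f γ α) := by
  by_cases hα : α + ω < γ
  · obtain ⟨n, hn⟩ := hf α (α + ω) (lt_add_of_pos_right α omega0_pos) hα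
    obtain ⟨k, hk⟩ := lt_omega0.1 (mod_lt α omega0_ne_zero)
    refine ⟨max n k, fun m hm => ?_⟩
    have hkm : ¬ (m : Ordinal) < α % ω := by
      rw [hk, Nat.cast_lt, not_lt]
      exact le_of_max_le_right hm
    have hfm : ¬ f (α + ω) m ≤ f α m := not_le.2 (hn m (le_of_max_le_left hm))
    simp [blockTrim, hkm, hfm]
  · exact ⟨0, fun m _ => by simp [blockTrim, hα]⟩

theorem blockTrim_add_natCast_eq_zero {β : Ordinal} (hβ : β + ω < γ) {n m : ℕ} (hm : m < n) :
    blockTrim f γ (β + n) m = 0 := by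
  have hpos : (m : Ordinal) < (β + n) % ω := by
    rw [add_natCast_mod_omega0]
    exact (Nat.cast_lt.2 hm).trans_le le_add_self
  rw [blockTrim, if_pos ⟨hpos.ne_bot, by rwa [add_natCast_add_omega0], Or.inl hpos⟩]

theorem blockTrim_add_natCast_le {β : Ordinal} (hβ : β + ω < γ) {n : ℕ} (hn : n ≠ 0) (m : ℕ) :
    blockTrim f γ (β + n) m ≤ f (β + ω) m := by
  have hpos : (β + n) % ω ≠ 0 := by
    rw [add_natCast_mod_omega0]
    exact (lt_of_lt_of_le (Nat.cast_pos'.2 (Nat.pos_of_ne_zero hn)) le_add_self).ne'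
  unfold blockTrim
  rw [add_natCast_add_omega0]
  split_ifs with h
  · exact zero_le
  · exact (not_le.1 fun hle => h ⟨hpos, hβ, Or.inr hle⟩).le

end blockTrim

/-- Every strongly increasing sequence `⟨f_α : α < γ⟩` can be modified, mod
finite, to a strongly increasing sequence `⟨f'_α : α < γ⟩` with `f_α =* f'_α` for all
`α < γ` that in addition satisfies condition (2) of Definition 1.2. -/
theorem statement4 (f : Ordinal → ℕ → Ordinal) (γ : Ordinal)
    (hf : StronglyIncreasingOn f γ) :
    ∃ f' : Ordinal → ℕ → Ordinal,
      (∀ α < γ, EqStar (f α) (f' α)) ∧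
      StronglyIncreasingOn f' γ ∧
      (∀ β : Ordinal, β + Ordinal.omega0 < γ → ∀ n : ℕ,
        ∃ α : Ordinal, β + 1 ≤ α ∧ α < β + Ordinal.omega0 ∧
          LeN n (f' α) (f' (β + Ordinal.omega0)) ∧ ∀ m : ℕ, m < n → f' α m = 0) := by
  refine ⟨blockTrim f γ, fun α _ => eqStar_blockTrim hf.1 α,
    hf.of_le_of_eqStar (fun α _ => blockTrim_le α) (fun α _ => eqStar_blockTrim hf.1 α)
      (fun β _ => blockTrim_of_isSuccLimit), fun β hβ n => ⟨β + (n + 1 : ℕ), ?_, ?_, ?_, ?_⟩⟩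
  · exact add_le_add_right (Nat.one_le_cast.2 n.succ_pos) β
  · rw [← add_natCast_add_omega0 β (n + 1)]
    exact lt_add_of_pos_right _ omega0_pos
  · intro m _
    rw [blockTrim_of_isSuccLimit (isSuccLimit_add β isSuccLimit_omega0)]
    exact blockTrim_add_natCast_le hβ n.succ_ne_zero m
  · intro m hm
    exact blockTrim_add_natCast_eq_zero hβ (hm.trans n.lt_succ_self)
end

section
/- Suppose λ is an uncountable regular cardinal, f⃗ = ⟨f_α : α < λ⁺³⟩ is a <*-increasing sequence of functions from ω to the ordinals (λ⁺³ being the third cardinal successor of λ), and h is an exact upper bound for f⃗ such that cf(h(i)) > λ for all i < ω. Then cf(h(i)) ≥ λ⁺³ for all but finitely many i < ω. -/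
open Ordinal Cardinal

/-!
Fix `κ` with `λ < κ < λ⁺³` and let `A = {i | cf (h i) = κ}`; if `A ≠ ∅` then `κ` is a cofinality,
hence regular. Choose cofinal increasing maps `F_i : κ → h i` for `i ∈ A`. Since `κ > ℵ₀`, every
`f_α` is dominated on `A` by `F_i (ρ α)` for a single `ρ α < κ`, and as `κ < λ⁺³ = cf λ⁺³`, some
value `ρ α = p` is taken cofinally often. The function `d = F_· p` lies below `h`, so `d <* f_β` for
some `β`; any `α ≥ β` with `ρ α = p` then gives `d i < f_α i ≤ F_i p = d i` for every large `i ∈ A`,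
so `A` is finite. As `κ` can only be `λ⁺` or `λ⁺⁺`, only finitely many `h i` have cofinality below
`λ⁺³`.
-/

open Filter Set Order

universe u v

theorem ltStar_iff_eventually {f g : ℕ → Ordinal} : LtStar f g ↔ ∀ᶠ m in atTop, f m < g m := by
  simp [LtStar, LtN, eventually_atTop]

theorem Order.eq_succ_or_eq_succ_succ_of_lt_of_lt_succ_succ_succ {α : Type*} [LinearOrder α]
    [SuccOrder α] [NoMaxOrder α] {a c : α} (hac : a < c) (hc : c < succ (succ (succ a))) :
    c = succ a ∨ c = succ (succ a) := by
  rw [lt_succ_iff] at hc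
  rcases (succ_le_of_lt hac).eq_or_lt with h | h
  · exact .inl h.symm
  · exact .inr (hc.antisymm (succ_le_of_lt h))

theorem exists_isCofinal_preimage_singleton {α ι : Type u} [LinearOrder α] (g : α → ι)
    (hι : #ι < Order.cof α) : ∃ p, IsCofinal (g ⁻¹' {p}) :=
  isCofinal_of_isCofinal_iUnion (fun a ↦ ⟨a, mem_iUnion.2 ⟨g a, rfl⟩, le_rfl⟩) hι

theorem Ordinal.IsFundamentalSeq.exists_forall_le {ι : Type v} [Countable ι] {a : Ordinal.{u}}
    {o : ι → Ordinal.{u}} {F : ∀ i, Iio a → Iio (o i)} (hF : ∀ i, IsFundamentalSeq (F i))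
    (ha : ℵ₀ < a.cof) (x : ι → Ordinal.{u}) : ∃ p : Iio a, ∀ i, x i < o i → x i ≤ F i p := by
  have hapos : 0 < a := pos_iff_ne_zero.2 fun h ↦ by simp [h] at ha
  have hrank : ∀ i, ∃ q : Iio a, x i < o i → x i ≤ F i q := by
    intro i
    by_cases hlt : x i < o i
    · obtain ⟨_, ⟨q, rfl⟩, hq⟩ := (hF i).isCofinal_range ⟨_, hlt⟩
      exact ⟨q, fun _ ↦ hq⟩
    · exact ⟨⟨0, hapos⟩, hlt.elim⟩
  choose q hq using hrank
  have hsup : ⨆ i, (q i : Ordinal) < a := by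
    refine lift_iSup_lt_of_lt_cof ?_ fun i ↦ (q i).2
    rw [← Ordinal.lift_cof]
    exact (lift_le_aleph0.2 mk_le_aleph0).trans_lt
      (by rwa [← lift_aleph0.{v, u}, Cardinal.lift_lt])
  refine ⟨⟨_, hsup⟩, fun i hi ↦ (hq i hi).trans ((hF i).strictMono.monotone ?_)⟩
  exact Ordinal.le_iSup (fun j ↦ (q j : Ordinal)) i

theorem IsEUB.exists_forall_ge_eventually_lt {f : Ordinal → ℕ → Ordinal} {γ : Ordinal}
    {h d : ℕ → Ordinal} (hf : ∀ α β, α < β → β < γ → LtStar (f α) (f β)) (hh : IsEUB f γ h)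
    (hd : LtStar d h) : ∃ β < γ, ∀ α, β ≤ α → α < γ → ∀ᶠ m in atTop, d m < f α m := by
  obtain ⟨β, hβγ, hdβ⟩ := hh.2 d hd
  refine ⟨β, hβγ, fun α hβα hαγ ↦ ?_⟩
  rcases hβα.eq_or_lt with rfl | hlt
  · exact ltStar_iff_eventually.1 hdβ
  · filter_upwards [ltStar_iff_eventually.1 hdβ, ltStar_iff_eventually.1 (hf β α hlt hαγ)]
      with m h₁ h₂ using h₁.trans h₂

theorem IsEUB.finite_setOf_cof_eq {f : Ordinal.{u} → ℕ → Ordinal.{u}} {γ : Ordinal.{u}}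
    {h : ℕ → Ordinal.{u}} (hf : ∀ α β, α < β → β < γ → LtStar (f α) (f β)) (hh : IsEUB f γ h)
    {κ : Cardinal.{u}} (hκ : ℵ₀ < κ) (hκγ : κ < γ.cof) : {i | (h i).cof = κ}.Finite := by
  set A := {i | (h i).cof = κ}
  by_contra hA
  obtain ⟨i₀, hi₀⟩ := Set.Infinite.nonempty hA
  have hκcof : κ.ord.cof = κ := by rw [← show (h i₀).cof = κ from hi₀, Ordinal.cof_ord_cof]
  have hγ : 0 < γ := pos_iff_ne_zero.2 fun h ↦ by simp [h] at hκγ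
  choose F hF using fun i : A ↦ exists_isFundamentalSeq (congrArg ord i.2)
  choose ρ hρ using fun α ↦ IsFundamentalSeq.exists_forall_le hF (hκcof.symm ▸ hκ) fun i ↦ f α i
  obtain ⟨p, hp⟩ : ∃ p, IsCofinal ((fun α : Iio γ ↦ ρ α) ⁻¹' {p}) := by
    refine exists_isCofinal_preimage_singleton _ ?_
    rwa [Cardinal.mk_Iio_ordinal, Ordinal.cof_Iio, ← Ordinal.lift_cof, Cardinal.lift_lt,
      card_ord]
  let d : ℕ → Ordinal := fun i ↦ if hi : i ∈ A then F ⟨i, hi⟩ p else f 0 i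
  have hd : ∀ i (hi : i ∈ A), d i = F ⟨i, hi⟩ p := fun i hi ↦ dif_pos hi
  have hdh : LtStar d h := by
    refine ltStar_iff_eventually.2 ((ltStar_iff_eventually.1 (hh.1 0 hγ)).mono fun i hi ↦ ?_)
    by_cases hiA : i ∈ A
    · exact hd i hiA ▸ (F ⟨i, hiA⟩ p).2
    · simpa [d, hiA] using hi
  obtain ⟨β, hβγ, hβ⟩ := hh.exists_forall_ge_eventually_lt hf hdh
  obtain ⟨⟨α, hαγ⟩, hαp, hβα⟩ := hp ⟨β, hβγ⟩
  obtain ⟨i, hiA, hdi, hαi⟩ := ((Nat.frequently_atTop_iff_infinite.2 hA).and_eventually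
    ((hβ α hβα hαγ).and (ltStar_iff_eventually.1 (hh.1 α hαγ)))).exists
  have hfd : f α i ≤ d i := hd i hiA ▸ (show ρ α = p from hαp) ▸ hρ α ⟨i, hiA⟩ hαi
  exact (hdi.trans_le hfd).false

theorem statement9_general (lam : Cardinal)
    (hunc : Cardinal.aleph0 < lam)
    (f : Ordinal → ℕ → Ordinal)
    (hf : ∀ α β : Ordinal, α < β →
      β < (Order.succ (Order.succ (Order.succ lam))).ord → LtStar (f α) (f β))
    (h : ℕ → Ordinal)
    (hh : IsEUB f (Order.succ (Order.succ (Order.succ lam))).ord h)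
    (hcof : ∀ i : ℕ, lam < (h i).cof) :
    ∃ n : ℕ, ∀ i : ℕ, n ≤ i → Order.succ (Order.succ (Order.succ lam)) ≤ (h i).cof := by
  have h₁ : lam < succ lam := lt_succ lam
  have h₂ : succ lam < succ (succ lam) := lt_succ _
  have h₃ : succ (succ lam) < succ (succ (succ lam)) := lt_succ _
  have hcof₃ : (succ (succ (succ lam))).ord.cof = succ (succ (succ lam)) :=
    (isRegular_succ (hunc.le.trans (h₁.trans h₂).le)).cof_ord
  have hfin : ∀ κ, lam < κ → κ < succ (succ (succ lam)) → {i | (h i).cof = κ}.Finite :=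
    fun κ hκ hκ₃ ↦ hh.finite_setOf_cof_eq hf (hunc.trans hκ) (hcof₃.symm ▸ hκ₃)
  have hbad : {i | (h i).cof < succ (succ (succ lam))}.Finite :=
    ((hfin _ h₁ (h₂.trans h₃)).union (hfin _ (h₁.trans h₂) h₃)).subset
      fun i hi ↦ eq_succ_or_eq_succ_succ_of_lt_of_lt_succ_succ_succ (hcof i) hi
  obtain ⟨n, hn⟩ := hbad.bddAbove
  exact ⟨n + 1, fun i hi ↦ not_lt.1 fun hlt ↦ by have := hn hlt; omega⟩

/-- If `lam` is an uncountable regular cardinal, `⟨f_α : α < lam⁺³⟩` is a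
`<*`-increasing sequence of functions from `ω` to the ordinals and `h` is an exact upper
bound for it with `cf(h(i)) > lam` for all `i < ω`, then `cf(h(i)) ≥ lam⁺³` for all but
finitely many `i < ω`. -/
theorem statement9 (lam : Cardinal) (hreg : lam.IsRegular)
    (hunc : Cardinal.aleph0 < lam)
    (f : Ordinal → ℕ → Ordinal)
    (hf : ∀ α β : Ordinal, α < β →
      β < (Order.succ (Order.succ (Order.succ lam))).ord → LtStar (f α) (f β))
    (h : ℕ → Ordinal)
    (hh : IsEUB f (Order.succ (Order.succ (Order.succ lam))).ord h)
    (hcof : ∀ i : ℕ, lam < (h i).cof) :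
    ∃ n : ℕ, ∀ i : ℕ, n ≤ i → Order.succ (Order.succ (Order.succ lam)) ≤ (h i).cof :=
  statement9_general lam hunc f hf h hh hcof
end
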